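/- Every integer can be represented in base −2 with digit set {1, 4}: for every n ∈ ℤ there exist k ∈ ℕ and coefficients b_0, …, b_k each equal to 1 or 4 such that n = Σ_{j=0}^{k} b_j·(−2)^j. (Equivalently, the ECSD G(−2n+1, −2n+4) has a single component whose cycle contains 0.) -/

import Mathlib

/-!
Write `n = d + (-2) m` with the digit `d ∈ {1, 4}` chosen of the same parity as `n`; an expansion
of `m` shifted one place and prefixed by `d` is an expansion of `n`. Since `|m| ≈ |n| / 2`, this
recursion strictly decreases `|n|` except at `n ∈ {-4, -2, -1, 0}`, where the parent `m` lies in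
`[1, 4]`; those four values are reached directly from the one-digit expansions `1` and `4`.
-/

open Finset

def HasDigitExpansion {R : Type*} [CommSemiring R] (β : R) (D : Set R) (n : R) : Prop :=
  ∃ k : ℕ, ∃ b : ℕ → R, (∀ j ≤ k, b j ∈ D) ∧ n = ∑ j ∈ range (k + 1), b j * β ^ j

namespace HasDigitExpansion

variable {R : Type*} [CommSemiring R] {β : R} {D : Set R} {d m : R}

theorem of_mem (hd : d ∈ D) : HasDigitExpansion β D d :=
  ⟨0, fun _ => d, fun _ _ => hd, by simp⟩

theorem digit_add_mul (hd : d ∈ D) (hm : HasDigitExpansion β D m) :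
    HasDigitExpansion β D (d + β * m) := by
  obtain ⟨k, b, hb, rfl⟩ := hm
  refine ⟨k + 1, fun j => if j = 0 then d else b (j - 1), ?_, ?_⟩
  · rintro (_ | j) hj
    · simpa using hd
    · simpa using hb j (by omega)
  · rw [sum_range_succ' _ (k + 1), mul_sum]
    simp only [add_tsub_cancel_right, Nat.add_eq_zero_iff, one_ne_zero, and_false, if_false,
      if_true, pow_zero, mul_one, pow_succ]
    rw [add_comm]
    congr 1
    exact sum_congr rfl fun j _ => by ring

end HasDigitExpansion

open HasDigitExpansion

theorem hasDigitExpansion_neg_two_one_four_of_mem_Icc {m : ℤ} (hm : m ∈ Set.Icc 1 4) :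
    HasDigitExpansion (-2) {1, 4} m := by
  have one : HasDigitExpansion (-2 : ℤ) {1, 4} 1 := of_mem (by simp)
  have four : HasDigitExpansion (-2 : ℤ) {1, 4} 4 := of_mem (by simp)
  have neg_one : HasDigitExpansion (-2 : ℤ) {1, 4} (-1) := by
    simpa using one.digit_add_mul (d := 1) (by simp)
  obtain ⟨h1, h4⟩ := hm
  interval_cases m
  · exact one
  · simpa using one.digit_add_mul (d := 4) (by simp)
  · simpa using neg_one.digit_add_mul (d := 1) (by simp)
  · exact four

theorem hasDigitExpansion_neg_two_one_four (n : ℤ) : HasDigitExpansion (-2) {1, 4} n := by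
  induction hN : n.natAbs using Nat.strong_induction_on generalizing n with
  | _ N ih =>
    obtain ⟨d, hd, m, rfl⟩ : ∃ d ∈ ({1, 4} : Set ℤ), ∃ m, n = d + -2 * m := by
      rcases Int.even_or_odd n with ⟨c, hc⟩ | ⟨c, hc⟩
      · exact ⟨4, by simp, 2 - c, by omega⟩
      · exact ⟨1, by simp, -c, by omega⟩
    refine digit_add_mul hd ?_
    by_cases hdesc : m.natAbs < N
    · exact ih _ hdesc m rfl
    · apply hasDigitExpansion_neg_two_one_four_of_mem_Icc
      rcases hd with rfl | rfl <;> constructor <;> omega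

/-- Every integer can be represented in base `-2` with digit set `{1, 4}`:
for every `n : ℤ` there exist `k` and digits `b_0, …, b_k ∈ {1, 4}` with
`n = Σ_{j=0}^{k} b_j * (-2) ^ j`. -/
theorem neg_two_base_digits_one_four_representation :
    ∀ n : ℤ, ∃ k : ℕ, ∃ b : ℕ → ℤ,
      (∀ j ≤ k, b j = 1 ∨ b j = 4) ∧
        n = ∑ j ∈ Finset.range (k + 1), b j * (-2 : ℤ) ^ j :=
  hasDigitExpansion_neg_two_one_four
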